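/- arXiv:2304.02895 — 4 statements merged into one kernel-verified Lean document; each statement's English description precedes it below -/
import Mathlib

section
/- Let α ∈ (0,1) and c ≥ ((2-α)/(1-α))·((1+α)/α). Then F(x) = x^α (c + sin(log x)) defined for x > 0 is positive, strictly increasing, and concave on (0,∞). -/
open Set Filter Real

/-!
The family `x ^ a * (p + q sin (log x) + r cos (log x))` is closed under differentiation,
with exponent `a - 1` and new coefficients `(a p, a q - r, a r + q)`. Since `|q sin t + r cos t|`
is at most `|q| + |r|`, such a function has the sign of `p` as soon as `|q| + |r| ≤ |p|`.
Applying this to `F`, `F'` and `F''`, the bound on `c` gives `F > 0`, `F' > 0` and `F'' ≤ 0`.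
-/

noncomputable def rpowMulTrigLog (a p q r x : ℝ) : ℝ :=
  x ^ a * (p + q * sin (log x) + r * cos (log x))

section

variable {a p q r x : ℝ}

theorem hasDerivAt_rpowMulTrigLog (hx : 0 < x) :
    HasDerivAt (rpowMulTrigLog a p q r)
      (rpowMulTrigLog (a - 1) (a * p) (a * q - r) (a * r + q) x) x := by
  have hlog := hasDerivAt_log hx.ne'
  have hpow : HasDerivAt (fun x : ℝ => x ^ a) (a * x ^ (a - 1)) x :=
    hasDerivAt_rpow_const (Or.inl hx.ne')
  have htrig : HasDerivAt (fun x => p + q * sin (log x) + r * cos (log x))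
      (q * (cos (log x) * x⁻¹) + r * (-sin (log x) * x⁻¹)) x :=
    (((hasDerivAt_sin _).comp x hlog).const_mul q |>.const_add p).add
      (((hasDerivAt_cos _).comp x hlog).const_mul r)
  refine (hpow.mul htrig).congr_deriv ?_
  have hinv : x ^ a * x⁻¹ = x ^ (a - 1) := by rw [rpow_sub_one hx.ne', div_eq_mul_inv]
  rw [rpowMulTrigLog, ← hinv]
  ring

theorem abs_mul_sin_add_mul_cos_le (t : ℝ) : |q * sin t + r * cos t| ≤ |q| + |r| := by
  calc |q * sin t + r * cos t| ≤ |q| * |sin t| + |r| * |cos t| := by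
        rw [← abs_mul, ← abs_mul]; exact abs_add_le _ _
    _ ≤ |q| * 1 + |r| * 1 := by
        gcongr
        exacts [abs_sin_le_one t, abs_cos_le_one t]
    _ = |q| + |r| := by ring

theorem rpowMulTrigLog_pos (hx : 0 < x) (h : |q| + |r| < p) : 0 < rpowMulTrigLog a p q r x := by
  have hbound := abs_le.1 (abs_mul_sin_add_mul_cos_le (q := q) (r := r) (log x))
  exact mul_pos (rpow_pos_of_pos hx a) (by linarith)

theorem rpowMulTrigLog_nonpos (hx : 0 < x) (h : p + |q| + |r| ≤ 0) :
    rpowMulTrigLog a p q r x ≤ 0 := by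
  have hbound := abs_le.1 (abs_mul_sin_add_mul_cos_le (q := q) (r := r) (log x))
  exact mul_nonpos_of_nonneg_of_nonpos (rpow_nonneg hx.le a) (by linarith)

theorem hasDerivWithinAt_rpowMulTrigLog_interior_Ioi :
    ∀ x ∈ interior (Ioi (0 : ℝ)), HasDerivWithinAt (rpowMulTrigLog a p q r)
      (rpowMulTrigLog (a - 1) (a * p) (a * q - r) (a * r + q) x) (interior (Ioi 0)) x := by
  rw [interior_Ioi]
  exact fun x hx => (hasDerivAt_rpowMulTrigLog hx).hasDerivWithinAt

theorem continuousOn_rpowMulTrigLog : ContinuousOn (rpowMulTrigLog a p q r) (Ioi 0) :=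
  fun _ hx => (hasDerivAt_rpowMulTrigLog hx).continuousAt.continuousWithinAt

theorem strictMonoOn_rpowMulTrigLog (h : |a * q - r| + |a * r + q| < a * p) :
    StrictMonoOn (rpowMulTrigLog a p q r) (Ioi 0) := by
  refine strictMonoOn_of_hasDerivWithinAt_pos (convex_Ioi 0) continuousOn_rpowMulTrigLog
    hasDerivWithinAt_rpowMulTrigLog_interior_Ioi ?_
  rw [interior_Ioi]
  exact fun x hx => rpowMulTrigLog_pos hx h

theorem concaveOn_rpowMulTrigLog
    (h : (a - 1) * (a * p) + |(a - 1) * (a * q - r) - (a * r + q)|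
      + |(a - 1) * (a * r + q) + (a * q - r)| ≤ 0) :
    ConcaveOn ℝ (Ioi 0) (rpowMulTrigLog a p q r) := by
  refine concaveOn_of_hasDerivWithinAt2_nonpos (convex_Ioi 0) continuousOn_rpowMulTrigLog
    hasDerivWithinAt_rpowMulTrigLog_interior_Ioi hasDerivWithinAt_rpowMulTrigLog_interior_Ioi ?_
  rw [interior_Ioi]
  exact fun x hx => rpowMulTrigLog_nonpos hx h

end

/-- For `α ∈ (0,1)` and `c ≥ ((2-α)/(1-α))·((1+α)/α)`, the function
`F x = x^α (c + sin (log x))` is positive, strictly increasing and concave on `(0,∞)`. -/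
theorem oscillating_F_concave
    (α c : ℝ) (hα : α ∈ Set.Ioo (0 : ℝ) 1)
    (hc : ((2 - α) / (1 - α)) * ((1 + α) / α) ≤ c) :
    (∀ x > (0 : ℝ), 0 < x ^ α * (c + Real.sin (Real.log x))) ∧
    StrictMonoOn (fun x : ℝ => x ^ α * (c + Real.sin (Real.log x))) (Set.Ioi 0) ∧
    ConcaveOn ℝ (Set.Ioi 0) (fun x : ℝ => x ^ α * (c + Real.sin (Real.log x))) := by
  obtain ⟨hα0, hα1⟩ := hα
  have hc' : (2 - α) * (1 + α) ≤ α * (1 - α) * c := by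
    rw [div_mul_div_comm, div_le_iff₀ (by nlinarith)] at hc
    linarith
  have hαc : α + 1 < α * c := by nlinarith
  have hF (x : ℝ) : x ^ α * (c + sin (log x)) = rpowMulTrigLog α c 1 0 x := by
    simp [rpowMulTrigLog]
  simp only [hF]
  refine ⟨fun x hx => rpowMulTrigLog_pos hx ?_, strictMonoOn_rpowMulTrigLog ?_,
    concaveOn_rpowMulTrigLog ?_⟩
  · simp only [abs_one, abs_zero, add_zero]
    nlinarith
  · simp only [mul_one, mul_zero, sub_zero, zero_add, abs_one, abs_of_pos hα0]
    exact hαc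
  · simp only [mul_one, mul_zero, sub_zero, zero_add]
    have h2α : |α - 1 + α| ≤ 1 := abs_le.2 ⟨by linarith, by linarith⟩
    rw [abs_of_neg (by nlinarith)]
    linarith
end

section
/- Let α ∈ (0,1), c ≥ ((2-α)/(1-α))·((1+α)/α), and F(x) = x^α (c + sin(log x)). Then for σ > 1, the limit lim_{ε→0⁺} F'(σε)/F'(ε) exists if and only if log σ ∈ 2πℕ. -/
open Set Filter Real

private lemma deriv_osc (α c : ℝ) (F : ℝ → ℝ)
    (hF : ∀ x > (0 : ℝ), F x = x ^ α * (c + Real.sin (Real.log x)))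
    {x : ℝ} (hx : 0 < x) :
    deriv F x = x ^ (α - 1) *
      (α * (c + Real.sin (Real.log x)) + Real.cos (Real.log x)) := by
  have hev : F =ᶠ[nhds x] fun y => y ^ α * (c + Real.sin (Real.log y)) := by
    filter_upwards [Ioi_mem_nhds hx] with y hy using hF y hy
  rw [hev.deriv_eq]
  have h1 : HasDerivAt (fun y : ℝ => y ^ α) (α * x ^ (α - 1)) x :=
    Real.hasDerivAt_rpow_const (Or.inl hx.ne')
  have h2 : HasDerivAt (fun y : ℝ => c + Real.sin (Real.log y))
      (Real.cos (Real.log x) * x⁻¹) x :=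
    ((Real.hasDerivAt_sin (Real.log x)).comp x (Real.hasDerivAt_log hx.ne')).const_add c
  rw [(show HasDerivAt (fun y : ℝ => y ^ α * (c + Real.sin (Real.log y))) _ x from h1.mul h2).deriv]
  have hxa : x ^ α * x⁻¹ = x ^ (α - 1) := by
    rw [Real.rpow_sub hx, Real.rpow_one]; field_simp
  have : x ^ α * (Real.cos (Real.log x) * x⁻¹)
      = x ^ (α - 1) * Real.cos (Real.log x) := by
    rw [mul_comm (Real.cos (Real.log x)), ← mul_assoc, hxa]
  rw [this]; ring

/-- For `α ∈ (0,1)`, `c ≥ ((2-α)/(1-α))·((1+α)/α)` and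
`F x = x^α (c + sin (log x))`, for every `σ > 1` the limit
`lim_{ε→0⁺} F'(σε)/F'(ε)` exists if and only if `log σ ∈ 2πℕ`. -/
theorem oscillating_F_limit_iff
    (α c : ℝ) (hα : α ∈ Set.Ioo (0 : ℝ) 1)
    (hc : ((2 - α) / (1 - α)) * ((1 + α) / α) ≤ c)
    (F : ℝ → ℝ) (hF : ∀ x > (0 : ℝ), F x = x ^ α * (c + Real.sin (Real.log x))) :
    ∀ σ > (1 : ℝ),
      (∃ L : ℝ,
        Filter.Tendsto (fun ε => deriv F (σ * ε) / deriv F ε)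
          (nhdsWithin 0 (Set.Ioi 0)) (nhds L)) ↔
      ∃ n : ℕ, Real.log σ = 2 * π * n := by
  obtain ⟨hα0, hα1⟩ := hα
  intro σ hσ
  have hσ0 : (0 : ℝ) < σ := lt_trans one_pos hσ
  set s := Real.log σ with hs
  have hs0 : 0 < s := Real.log_pos hσ
  set h : ℝ → ℝ := fun t => α * (c + Real.sin t) + Real.cos t with hh
  -- positivity of h
  have hαc : α + 1 < α * c := by
    have h1α : 0 < 1 - α := by linarith
    have key : (2 - α) * (1 + α) ≤ α * (1 - α) * c := by
      have h' := mul_le_mul_of_nonneg_left hc (le_of_lt (mul_pos hα0 h1α))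
      have e : α * (1 - α) * ((2 - α) / (1 - α) * ((1 + α) / α)) = (2 - α) * (1 + α) := by
        field_simp
      rw [e] at h'
      exact h'
    nlinarith [key, mul_pos hα0 h1α]
  have hpos : ∀ t, 0 < h t := by
    intro t
    have h1 : -1 ≤ Real.sin t := Real.neg_one_le_sin t
    have h2 : -1 ≤ Real.cos t := Real.neg_one_le_cos t
    have : α * (-1) ≤ α * Real.sin t := by nlinarith
    simp only [hh]; nlinarith
  -- periodicity of h
  have hper : ∀ (t : ℝ) (n : ℤ), h (t + n * (2 * π)) = h t := by
    intro t n
    simp only [hh, Real.sin_add_int_mul_two_pi, Real.cos_add_int_mul_two_pi]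
  have hpern : ∀ (t : ℝ) (n : ℕ), h (t - n * (2 * π)) = h t := by
    intro t n
    have := hper t (-(n : ℤ))
    rw [show ((-(n : ℤ) : ℤ) : ℝ) = -(n : ℝ) by push_cast; ring] at this
    rw [show t - (n : ℝ) * (2 * π) = t + -(n : ℝ) * (2 * π) by ring]
    exact this
  -- the ratio formula on Ioi 0
  have hratio : ∀ ε > (0 : ℝ),
      deriv F (σ * ε) / deriv F ε
        = σ ^ (α - 1) * (h (s + Real.log ε) / h (Real.log ε)) := by
    intro ε hε
    have hσε : 0 < σ * ε := mul_pos hσ0 hε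
    rw [deriv_osc α c F hF hσε, deriv_osc α c F hF hε,
      Real.log_mul hσ0.ne' hε.ne', Real.mul_rpow hσ0.le hε.le]
    have hA := hpos (s + Real.log ε)
    have hB := hpos (Real.log ε)
    have hE : (0 : ℝ) < ε ^ (α - 1) := Real.rpow_pos_of_pos hε _
    simp only [hh] at hA hB ⊢
    field_simp [hA.ne', hB.ne', hE.ne']
    ring
  constructor
  · -- limit exists → s = 2πn
    rintro ⟨L, hL⟩
    have hσa : (0 : ℝ) < σ ^ (α - 1) := Real.rpow_pos_of_pos hσ0 _
    -- for every t, the constant value σ^(α-1) * h(s+t)/h t equals L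
    have hconst : ∀ t : ℝ, σ ^ (α - 1) * (h (s + t) / h t) = L := by
      intro t
      set u : ℕ → ℝ := fun n => Real.exp (t - (n : ℝ) * (2 * π)) with hu
      have hupos : ∀ n, 0 < u n := fun n => Real.exp_pos _
      have hu0 : Tendsto u atTop (nhdsWithin 0 (Set.Ioi 0)) := by
        apply tendsto_nhdsWithin_of_tendsto_nhds_of_eventually_within
        · have h1 : Tendsto (fun n : ℕ => (n : ℝ) * (2 * π)) atTop atTop :=
            tendsto_natCast_atTop_atTop.atTop_mul_const (by positivity)
          have h2 : Tendsto (fun n : ℕ => -((n : ℝ) * (2 * π))) atTop atBot :=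
            tendsto_neg_atTop_atBot.comp h1
          have h3 := tendsto_atBot_add_const_left atTop t h2
          have h4 : Tendsto (fun n : ℕ => t - (n : ℝ) * (2 * π)) atTop atBot :=
            h3.congr (fun n => by ring)
          exact Real.tendsto_exp_atBot.comp h4
        · exact Eventually.of_forall fun n => hupos n
      have hcomp : Tendsto (fun n => deriv F (σ * u n) / deriv F (u n)) atTop (nhds L) :=
        hL.comp hu0
      have heq : ∀ n : ℕ, deriv F (σ * u n) / deriv F (u n)
          = σ ^ (α - 1) * (h (s + t) / h t) := by
        intro n
        rw [hratio (u n) (hupos n)]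
        have hlog : Real.log (u n) = t - (n : ℝ) * (2 * π) := by
          simp only [hu]; exact Real.log_exp _
        rw [hlog]
        have e1 : h (s + (t - (n : ℝ) * (2 * π))) = h (s + t) := by
          rw [show s + (t - (n : ℝ) * (2 * π)) = (s + t) - (n : ℝ) * (2 * π) by ring]
          exact hpern (s + t) n
        rw [e1, hpern t n]
      rw [Filter.tendsto_congr heq] at hcomp
      exact tendsto_nhds_unique tendsto_const_nhds hcomp
    -- h (s + t) = K * h t for all t where K = L / σ^(α-1)
    set K : ℝ := L / σ ^ (α - 1) with hK
    have hKey : ∀ t, h (s + t) = K * h t := by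
      intro t
      have e := hconst t
      have ht := (hpos t).ne'
      have hσ' := hσa.ne'
      rw [hK, div_mul_eq_mul_div, eq_div_iff hσ']
      have e' : σ ^ (α - 1) * (h (s + t) / h t) * h t = L * h t := by rw [e]
      rw [mul_assoc, div_mul_cancel₀ _ ht] at e'
      linear_combination e'
    -- K = 1
    have hsumpi : ∀ t, h t + h (t + π) = 2 * (α * c) := by
      intro t
      simp only [hh, Real.sin_add_pi, Real.cos_add_pi]
      ring
    have hK1 : K = 1 := by
      have hαc0 : 0 < α * c := by nlinarith
      have a1 := hKey 0
      rw [add_zero] at a1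
      have a2 := hKey π
      have e12 : h s + h (s + π) = K * (h 0 + h π) := by rw [a1, a2]; ring
      have hsum0 : h 0 + h π = 2 * (α * c) := by simpa using hsumpi 0
      rw [hsumpi s, hsum0] at e12
      have hfac : (K - 1) * (2 * (α * c)) = 0 := by linear_combination -e12
      rcases mul_eq_zero.mp hfac with h' | h'
      · linarith
      · linarith
    -- now h (s + t) = h t for all t
    have hper' : ∀ t, h (s + t) = h t := by
      intro t; rw [hKey t, hK1, one_mul]
    -- derive sin s = 0, cos s = 1
    have e0 := hper' 0
    have epi2 := hper' (π / 2)
    simp only [hh, add_zero, Real.sin_zero, Real.cos_zero] at e0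
    simp only [hh] at epi2
    rw [Real.sin_add_pi_div_two, Real.cos_add_pi_div_two, Real.sin_pi_div_two,
      Real.cos_pi_div_two] at epi2
    -- e0 : α * (c + sin s) + cos s = α * (c + 0) + 1
    -- epi2 : α * (c + cos s) + (- sin s) = α * (c + 1) + 0
    have hsin : Real.sin s = 0 := by
      have hfac : Real.sin s * (α ^ 2 + 1) = 0 := by linear_combination α * e0 - epi2
      rcases mul_eq_zero.mp hfac with h' | h'
      · exact h'
      · nlinarith [sq_nonneg α]
    have hcos : Real.cos s = 1 := by linear_combination e0 - α * hsin
    obtain ⟨n, hn⟩ := (Real.cos_eq_one_iff s).mp hcos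
    have hn0 : 0 < n := by
      by_contra hcon
      push_neg at hcon
      have : (n : ℝ) * (2 * π) ≤ 0 := by
        apply mul_nonpos_of_nonpos_of_nonneg
        · exact_mod_cast hcon
        · positivity
      linarith [hn ▸ hs0]
    refine ⟨n.toNat, ?_⟩
    rw [← hn]
    have hcast : ((n.toNat : ℕ) : ℝ) = (n : ℝ) := by
      exact_mod_cast Int.toNat_of_nonneg hn0.le
    rw [hcast]; ring
  · -- s = 2πn → limit exists
    rintro ⟨n, hn⟩
    refine ⟨σ ^ (α - 1), ?_⟩
    have hev : ∀ᶠ ε in nhdsWithin (0 : ℝ) (Set.Ioi 0),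
        deriv F (σ * ε) / deriv F ε = σ ^ (α - 1) := by
      filter_upwards [self_mem_nhdsWithin] with ε hε
      rw [hratio ε hε]
      have : h (s + Real.log ε) = h (Real.log ε) := by
        have := hper (Real.log ε) (n : ℤ)
        rw [show (((n : ℤ) : ℤ) : ℝ) = (n : ℝ) by push_cast; ring] at this
        rw [show s + Real.log ε = Real.log ε + (n : ℝ) * (2 * π) by
          linarith [show s = 2 * π * (n : ℝ) from hn]]
        exact this
      rw [this, div_self (hpos _).ne', mul_one]
    exact Tendsto.congr' (Filter.EventuallyEq.symm hev) tendsto_const_nhds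
end

section
/- For the warped product geodesic system with C¹ convex warping function f (f(0)=0, f>0 on (0,R)): let (r,θ) solve ṙ = sin θ, θ̇ = (f'(r)/f(r)) cos θ with r(0) = δ > 0, θ(0) = 0, and define u(t) ≥ 0 by f(u) = f(r) sin θ for t ≥ 0. Then u̇(t) f'(u(t)) = f'(r(t)), hence u̇ ≥ 1 and r(t) ≥ u(t) ≥ t for all t ≥ 0. -/
open Set Filter Real

/-- For the warped product geodesic system with C¹ convex warping function `f`
(`f 0 = 0`, `f > 0` on `(0,R)`): if `(r,θ)` solves `ṙ = sin θ`, `θ̇ = (f'(r)/f(r)) cos θ`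
on `[0,T)` with `r 0 = δ > 0`, `θ 0 = 0`, and `u ≥ 0` is defined by
`f(u) = f(r) sin θ`, then `u̇ f'(u) = f'(r)`, hence `u̇ ≥ 1` and `r t ≥ u t ≥ t`
for all `t ≥ 0`. -/
theorem lower_bound_via_u
    (R : ℝ) (hR : 0 < R) (f f' : ℝ → ℝ)
    (hcont : ContinuousOn f (Set.Ico 0 R))
    (hderiv : ∀ x ∈ Set.Ico 0 R, HasDerivWithinAt f (f' x) (Set.Ici 0) x)
    (hf'cont : ContinuousOn f' (Set.Ico 0 R))
    (hconv : ConvexOn ℝ (Set.Ico 0 R) f)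
    (hf0 : f 0 = 0)
    (hpos : ∀ x ∈ Set.Ioo 0 R, 0 < f x)
    (T δ : ℝ) (hT : 0 < T) (hδ : 0 < δ) (hδR : δ < R)
    (r θ u u' : ℝ → ℝ)
    (hrange_r : ∀ t ∈ Set.Ico 0 T, r t ∈ Set.Ioo 0 R)
    (hrange_θ : ∀ t ∈ Set.Ico 0 T, θ t ∈ Set.Ioo (-(π / 2)) (π / 2))
    (hr : ∀ t ∈ Set.Ico 0 T, HasDerivWithinAt r (Real.sin (θ t)) (Set.Ici 0) t)
    (hθ : ∀ t ∈ Set.Ico 0 T,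
      HasDerivWithinAt θ (f' (r t) / f (r t) * Real.cos (θ t)) (Set.Ici 0) t)
    (hr0 : r 0 = δ) (hθ0 : θ 0 = 0)
    (hu_nonneg : ∀ t ∈ Set.Ico 0 T, 0 ≤ u t)
    (hu_lt : ∀ t ∈ Set.Ico 0 T, u t < R)
    (hu_def : ∀ t ∈ Set.Ico 0 T, f (u t) = f (r t) * Real.sin (θ t))
    (hu_deriv : ∀ t ∈ Set.Ico 0 T, HasDerivWithinAt u (u' t) (Set.Ici 0) t) :
    (∀ t ∈ Set.Ioo 0 T, u' t * f' (u t) = f' (r t) ∧ 1 ≤ u' t) ∧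
    (∀ t ∈ Set.Ico 0 T, t ≤ u t ∧ u t ≤ r t) := by
  have h0T : (0 : ℝ) ∈ Set.Ico 0 T := ⟨le_refl 0, hT⟩
  -- f has an honest derivative at interior points
  have hderivAt : ∀ x ∈ Set.Ioo 0 R, HasDerivAt f (f' x) x := fun x hx =>
    (hderiv x ⟨hx.1.le, hx.2⟩).hasDerivAt (Ici_mem_nhds hx.1)
  -- f' is positive on (0,R)
  have hf'pos : ∀ x ∈ Set.Ioo 0 R, 0 < f' x := by
    intro x hx
    have hsl : slope f 0 x ≤ f' x :=
      hconv.slope_le_of_hasDerivAt ⟨le_refl 0, hR⟩ ⟨hx.1.le, hx.2⟩ hx.1 (hderivAt x hx)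
    have hsv : slope f 0 x = f x / x := by
      rw [slope_def_field, hf0]; ring
    have : 0 < f x / x := div_pos (hpos x hx) hx.1
    linarith [hsv ▸ hsl]
  -- f' is monotone on (0,R)
  have hf'mono : ∀ a ∈ Set.Ioo 0 R, ∀ b ∈ Set.Ioo 0 R, a ≤ b → f' a ≤ f' b := by
    intro a ha b hb hab
    rcases eq_or_lt_of_le hab with rfl | hlt
    · rfl
    · exact (hconv.le_slope_of_hasDerivAt ⟨ha.1.le, ha.2⟩ ⟨hb.1.le, hb.2⟩ hlt
        (hderivAt a ha)).trans
        (hconv.slope_le_of_hasDerivAt ⟨ha.1.le, ha.2⟩ ⟨hb.1.le, hb.2⟩ hlt (hderivAt b hb))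
  -- f is strictly monotone on [0,R)
  have fmono : StrictMonoOn f (Set.Ico 0 R) := by
    apply strictMonoOn_of_deriv_pos (convex_Ico 0 R) hcont
    intro x hx
    rw [interior_Ico] at hx
    rw [(hderivAt x hx).deriv]
    exact hf'pos x hx
  -- u t ≤ r t
  have hur : ∀ t ∈ Set.Ico 0 T, u t ≤ r t := by
    intro t ht
    by_contra h
    push_neg at h
    have hfr := hpos _ (hrange_r t ht)
    have h1 : f (u t) ≤ f (r t) := by
      rw [hu_def t ht]
      exact mul_le_of_le_one_right hfr.le (Real.sin_le_one _)
    have h2 : f (r t) < f (u t) :=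
      fmono ⟨(hrange_r t ht).1.le, (hrange_r t ht).2⟩ ⟨hu_nonneg t ht, hu_lt t ht⟩ h
    linarith
  -- θ is strictly increasing on [0,T)
  have θcont : ContinuousOn θ (Set.Ico 0 T) := fun t ht =>
    ((hθ t ht).continuousWithinAt).mono Ico_subset_Ici_self
  have θmono : StrictMonoOn θ (Set.Ico 0 T) := by
    apply strictMonoOn_of_deriv_pos (convex_Ico 0 T) θcont
    intro x hx
    rw [interior_Ico] at hx
    have hx' : x ∈ Set.Ico 0 T := ⟨hx.1.le, hx.2⟩
    rw [((hθ x hx').hasDerivAt (Ici_mem_nhds hx.1)).deriv]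
    have hc := Real.cos_pos_of_mem_Ioo (hrange_θ x hx')
    exact mul_pos (div_pos (hf'pos _ (hrange_r x hx')) (hpos _ (hrange_r x hx'))) hc
  have θpos : ∀ t ∈ Set.Ioo 0 T, 0 < θ t := by
    intro t ht
    have := θmono h0T ⟨ht.1.le, ht.2⟩ ht.1
    rwa [hθ0] at this
  -- u t > 0 on (0,T)
  have upos : ∀ t ∈ Set.Ioo 0 T, 0 < u t := by
    intro t ht
    have ht' : t ∈ Set.Ico 0 T := ⟨ht.1.le, ht.2⟩
    have hsin : 0 < Real.sin (θ t) :=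
      Real.sin_pos_of_pos_of_lt_pi (θpos t ht)
        (lt_trans (hrange_θ t ht').2 (by linarith [Real.pi_pos]))
    have hfu : 0 < f (u t) := by
      rw [hu_def t ht']
      exact mul_pos (hpos _ (hrange_r t ht')) hsin
    rcases (hu_nonneg t ht').lt_or_eq with h | h
    · exact h
    · rw [← h, hf0] at hfu; linarith
  -- the derivative identity on [0,T)
  have ident : ∀ t ∈ Set.Ico 0 T, u' t * f' (u t) = f' (r t) := by
    intro t ht
    have hfrne : f (r t) ≠ 0 := (hpos _ (hrange_r t ht)).ne'
    have h1 : HasDerivWithinAt (f ∘ u) (f' (u t) * u' t) (Set.Ico 0 T) t :=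
      HasDerivWithinAt.comp t (hderiv (u t) ⟨hu_nonneg t ht, hu_lt t ht⟩)
        ((hu_deriv t ht).mono Ico_subset_Ici_self) (fun x hx => hu_nonneg x hx)
    have hfr : HasDerivWithinAt (f ∘ r) (f' (r t) * Real.sin (θ t)) (Set.Ico 0 T) t :=
      HasDerivWithinAt.comp t (hderiv (r t) ⟨(hrange_r t ht).1.le, (hrange_r t ht).2⟩)
        ((hr t ht).mono Ico_subset_Ici_self) (fun x hx => (hrange_r x hx).1.le)
    have hsθ : HasDerivWithinAt (fun τ => Real.sin (θ τ))
        (Real.cos (θ t) * (f' (r t) / f (r t) * Real.cos (θ t))) (Set.Ico 0 T) t :=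
      (Real.hasDerivAt_sin (θ t)).comp_hasDerivWithinAt t
        ((hθ t ht).mono Ico_subset_Ici_self)
    have h2 : HasDerivWithinAt (fun τ => f (r τ) * Real.sin (θ τ))
        (f' (r t) * Real.sin (θ t) * Real.sin (θ t) +
          f (r t) * (Real.cos (θ t) * (f' (r t) / f (r t) * Real.cos (θ t))))
        (Set.Ico 0 T) t := hfr.mul hsθ
    have heq : f' (r t) * Real.sin (θ t) * Real.sin (θ t) +
        f (r t) * (Real.cos (θ t) * (f' (r t) / f (r t) * Real.cos (θ t))) = f' (r t) := by
      have h3 : f (r t) * (Real.cos (θ t) * (f' (r t) / f (r t) * Real.cos (θ t)))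
          = f' (r t) * Real.cos (θ t) ^ 2 := by
        field_simp
      rw [h3]
      have h4 : f' (r t) * Real.sin (θ t) * Real.sin (θ t) = f' (r t) * Real.sin (θ t) ^ 2 := by
        ring
      rw [h4, ← mul_add, Real.sin_sq_add_cos_sq, mul_one]
    rw [heq] at h2
    have h2' : HasDerivWithinAt (f ∘ u) (f' (r t)) (Set.Ico 0 T) t :=
      h2.congr (fun y hy => hu_def y hy) (hu_def t ht)
    have e1 := h1.derivWithin ((uniqueDiffOn_Ico 0 T) t ht)
    have e2 := h2'.derivWithin ((uniqueDiffOn_Ico 0 T) t ht)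
    rw [e1] at e2
    linarith [e2]
  -- u' ≥ 1 on (0,T)
  have hu'ge : ∀ t ∈ Set.Ioo 0 T, 1 ≤ u' t := by
    intro t ht
    have ht' : t ∈ Set.Ico 0 T := ⟨ht.1.le, ht.2⟩
    have hu_mem : u t ∈ Set.Ioo 0 R := ⟨upos t ht, hu_lt t ht'⟩
    have h1 : 0 < f' (u t) := hf'pos _ hu_mem
    have h2 : f' (u t) ≤ f' (r t) := hf'mono _ hu_mem _ (hrange_r t ht') (hur t ht')
    have h3 := ident t ht'
    nlinarith
  -- u 0 = 0
  have hu0 : u 0 = 0 := by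
    have h := hu_def 0 h0T
    rw [hθ0, Real.sin_zero, mul_zero] at h
    rcases (hu_nonneg 0 h0T).lt_or_eq with hlt | heq
    · exfalso
      have := hpos _ (⟨hlt, hu_lt 0 h0T⟩ : u 0 ∈ Set.Ioo 0 R)
      linarith
    · exact heq.symm
  constructor
  · exact fun t ht => ⟨ident t ⟨ht.1.le, ht.2⟩, hu'ge t ht⟩
  · intro t ht
    refine ⟨?_, hur t ht⟩
    have ucont : ContinuousOn u (Set.Ico 0 T) := fun x hx =>
      ((hu_deriv x hx).continuousWithinAt).mono Ico_subset_Ici_self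
    have hdAt : ∀ x ∈ Set.Ioo 0 T, HasDerivAt u (u' x) x := fun x hx =>
      (hu_deriv x ⟨hx.1.le, hx.2⟩).hasDerivAt (Ici_mem_nhds hx.1)
    have key := (convex_Ico 0 T).mul_sub_le_image_sub_of_le_deriv ucont
      (by
        rw [interior_Ico]
        exact fun x hx => ((hdAt x hx).differentiableAt).differentiableWithinAt)
      (C := 1)
      (by
        intro x hx
        rw [interior_Ico] at hx
        rw [(hdAt x hx).deriv]
        exact hu'ge x hx)
      0 h0T t ht ht.1
    rw [hu0] at key
    linarith
end

section
/- Comparison principle: let f be C¹, convex, with f(0)=0, f>0 on (0,R), and let (r,θ) and (r̄,θ̄) be two solutions of ṙ = sin θ, θ̇ = (f'(r)/f(r)) cos θ with θ(0) = θ̄(0) = 0 and 0 < δ = r(0) < δ̄ = r̄(0). Then r(t) < r̄(t) for all t > 0 in the common interval of existence. -/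
open Set Filter Real

lemma cp_aux_derivs (R T : ℝ) (f f' : ℝ → ℝ)
    (hderiv : ∀ x ∈ Set.Ico 0 R, HasDerivWithinAt f (f' x) (Set.Ici 0) x)
    (r θ : ℝ → ℝ)
    (hrange_r : ∀ t ∈ Set.Ico 0 T, r t ∈ Set.Ioo 0 R)
    (hr : ∀ t ∈ Set.Ico 0 T, HasDerivWithinAt r (Real.sin (θ t)) (Set.Ici 0) t)
    (hθ : ∀ t ∈ Set.Ico 0 T,
      HasDerivWithinAt θ (f' (r t) / f (r t) * Real.cos (θ t)) (Set.Ici 0) t)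
    (hfne : ∀ t ∈ Set.Ico 0 T, f (r t) ≠ 0) :
    ∀ t ∈ Set.Ico 0 T,
      HasDerivWithinAt (fun s => f (r s) * Real.cos (θ s)) 0 (Set.Ico 0 T) t ∧
      HasDerivWithinAt (fun s => f (r s) * Real.sin (θ s)) (f' (r t)) (Set.Ico 0 T) t := by
  intro t ht
  have hrt := hrange_r t ht
  have hmaps : MapsTo r (Set.Ico 0 T) (Set.Ici 0) := fun s hs => (hrange_r s hs).1.le
  have hsub : Set.Ico (0:ℝ) T ⊆ Set.Ici 0 := fun s hs => hs.1
  have hfr : HasDerivWithinAt (fun s => f (r s)) (f' (r t) * Real.sin (θ t)) (Set.Ico 0 T) t :=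
    (hderiv (r t) ⟨hrt.1.le, hrt.2⟩).comp t ((hr t ht).mono hsub) hmaps
  have hθ' := (hθ t ht).mono hsub
  have hcos : HasDerivWithinAt (fun s => Real.cos (θ s))
      (-Real.sin (θ t) * (f' (r t) / f (r t) * Real.cos (θ t))) (Set.Ico 0 T) t :=
    (Real.hasDerivAt_cos (θ t)).comp_hasDerivWithinAt t hθ'
  have hsin : HasDerivWithinAt (fun s => Real.sin (θ s))
      (Real.cos (θ t) * (f' (r t) / f (r t) * Real.cos (θ t))) (Set.Ico 0 T) t :=
    (Real.hasDerivAt_sin (θ t)).comp_hasDerivWithinAt t hθ'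
  have hne := hfne t ht
  constructor
  · have : HasDerivWithinAt (fun s => f (r s) * Real.cos (θ s)) _ (Set.Ico 0 T) t := hfr.fun_mul hcos
    convert this using 1
    field_simp
    ring
  · have : HasDerivWithinAt (fun s => f (r s) * Real.sin (θ s)) _ (Set.Ico 0 T) t := hfr.fun_mul hsin
    convert this using 1
    have hpy := Real.sin_sq_add_cos_sq (θ t)
    have hkey : f (r t) * (Real.cos (θ t) * (f' (r t) / f (r t) * Real.cos (θ t)))
        = f' (r t) * Real.cos (θ t) ^ 2 := by field_simp
    rw [hkey]
    linear_combination (-(f' (r t))) * hpy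

lemma cp_const (T : ℝ) (F : ℝ → ℝ)
    (hF : ∀ t ∈ Set.Ico 0 T, HasDerivWithinAt F 0 (Set.Ico 0 T) t) :
    ∀ t ∈ Set.Ico 0 T, F t = F 0 := by
  intro t ht
  have hsub : Set.Icc 0 t ⊆ Set.Ico 0 T := fun s hs => ⟨hs.1, lt_of_le_of_lt hs.2 ht.2⟩
  have hcont : ContinuousOn F (Set.Icc 0 t) :=
    fun s hs => ((hF s (hsub hs)).continuousWithinAt).mono hsub
  have hd : ∀ x ∈ Set.Ico 0 t, HasDerivWithinAt F 0 (Set.Ici x) x := by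
    intro x hx
    have hx' : x ∈ Set.Ico 0 T := ⟨hx.1, lt_trans hx.2 ht.2⟩
    refine (hF x hx').mono_of_mem_nhdsWithin ?_
    have h1 : Set.Ici x ∩ Set.Iio T ∈ nhdsWithin x (Set.Ici x) :=
      inter_mem_nhdsWithin _ (Iio_mem_nhds hx'.2)
    exact Filter.mem_of_superset h1 (fun s hs => ⟨le_trans hx.1 hs.1, hs.2⟩)
  exact constant_of_has_deriv_right_zero hcont hd t ⟨ht.1, le_refl t⟩

/-- Comparison principle: if `(r,θ)` and `(r̄,θ̄)` are two solutions of
`ṙ = sin θ`, `θ̇ = (f'(r)/f(r)) cos θ` (with `f` C¹, convex, `f 0 = 0`, `f > 0`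
on `(0,R)`) with `θ 0 = θ̄ 0 = 0` and `0 < r 0 = δ < δ̄ = r̄ 0`, then
`r t < r̄ t` for all `t > 0` in the common interval of existence. -/
theorem comparison_principle
    (R : ℝ) (hR : 0 < R) (f f' : ℝ → ℝ)
    (hcont : ContinuousOn f (Set.Ico 0 R))
    (hderiv : ∀ x ∈ Set.Ico 0 R, HasDerivWithinAt f (f' x) (Set.Ici 0) x)
    (hf'cont : ContinuousOn f' (Set.Ico 0 R))
    (hconv : ConvexOn ℝ (Set.Ico 0 R) f)
    (hf0 : f 0 = 0)
    (hpos : ∀ x ∈ Set.Ioo 0 R, 0 < f x)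
    (T δ δb : ℝ) (hT : 0 < T) (hδ : 0 < δ) (hδδb : δ < δb) (hδbR : δb < R)
    (r θ rb θb : ℝ → ℝ)
    (hrange_r : ∀ t ∈ Set.Ico 0 T, r t ∈ Set.Ioo 0 R)
    (hrange_θ : ∀ t ∈ Set.Ico 0 T, θ t ∈ Set.Ioo (-(π / 2)) (π / 2))
    (hr : ∀ t ∈ Set.Ico 0 T, HasDerivWithinAt r (Real.sin (θ t)) (Set.Ici 0) t)
    (hθ : ∀ t ∈ Set.Ico 0 T,
      HasDerivWithinAt θ (f' (r t) / f (r t) * Real.cos (θ t)) (Set.Ici 0) t)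
    (hrange_rb : ∀ t ∈ Set.Ico 0 T, rb t ∈ Set.Ioo 0 R)
    (hrange_θb : ∀ t ∈ Set.Ico 0 T, θb t ∈ Set.Ioo (-(π / 2)) (π / 2))
    (hrb : ∀ t ∈ Set.Ico 0 T, HasDerivWithinAt rb (Real.sin (θb t)) (Set.Ici 0) t)
    (hθb : ∀ t ∈ Set.Ico 0 T,
      HasDerivWithinAt θb (f' (rb t) / f (rb t) * Real.cos (θb t)) (Set.Ici 0) t)
    (hr0 : r 0 = δ) (hθ0 : θ 0 = 0)
    (hrb0 : rb 0 = δb) (hθb0 : θb 0 = 0) :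
    ∀ t ∈ Set.Ioo 0 T, r t < rb t := by
  have hδR : δ < R := lt_trans hδδb hδbR
  have hfne : ∀ t ∈ Set.Ico 0 T, f (r t) ≠ 0 :=
    fun t ht => (hpos _ (hrange_r t ht)).ne'
  have hfbne : ∀ t ∈ Set.Ico 0 T, f (rb t) ≠ 0 :=
    fun t ht => (hpos _ (hrange_rb t ht)).ne'
  have hD := cp_aux_derivs R T f f' hderiv r θ hrange_r hr hθ hfne
  have hDb := cp_aux_derivs R T f f' hderiv rb θb hrange_rb hrb hθb hfbne
  -- conserved quantities
  have hFc : ∀ t ∈ Set.Ico 0 T, f (r t) * Real.cos (θ t) = f δ := by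
    intro t ht
    have h := cp_const T _ (fun s hs => (hD s hs).1) t ht
    rwa [hr0, hθ0, Real.cos_zero, mul_one] at h
  have hFbc : ∀ t ∈ Set.Ico 0 T, f (rb t) * Real.cos (θb t) = f δb := by
    intro t ht
    have h := cp_const T _ (fun s hs => (hDb s hs).1) t ht
    rwa [hrb0, hθb0, Real.cos_zero, mul_one] at h
  -- convexity consequences
  have hdf : ∀ x ∈ Set.Ioo 0 R, HasDerivAt f (f' x) x := by
    intro x hx
    exact (hderiv x ⟨hx.1.le, hx.2⟩).hasDerivAt (Ici_mem_nhds hx.1)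
  have hf'pos : ∀ x ∈ Set.Ioo 0 R, 0 < f' x := by
    intro x hx
    have h1 := hconv.slope_le_of_hasDerivAt ⟨le_refl 0, hR⟩ ⟨hx.1.le, hx.2⟩ hx.1 (hdf x hx)
    rw [slope_def_field, hf0, sub_zero, sub_zero] at h1
    exact lt_of_lt_of_le (div_pos (hpos x hx) hx.1) h1
  have hf'mono : ∀ x y, x ∈ Set.Ioo 0 R → y ∈ Set.Ioo 0 R → x ≤ y → f' x ≤ f' y := by
    intro x y hx hy hxy
    rcases eq_or_lt_of_le hxy with rfl | h
    · exact le_refl _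
    · exact (hconv.le_slope_of_hasDerivAt ⟨hx.1.le, hx.2⟩ ⟨hy.1.le, hy.2⟩ h (hdf x hx)).trans
        (hconv.slope_le_of_hasDerivAt ⟨hx.1.le, hx.2⟩ ⟨hy.1.le, hy.2⟩ h (hdf y hy))
  have hfmono : ∀ x y, x ∈ Set.Ioo 0 R → y ∈ Set.Ioo 0 R → x < y → f x < f y := by
    intro x y hx hy hxy
    have h1 := hconv.le_slope_of_hasDerivAt ⟨hx.1.le, hx.2⟩ ⟨hy.1.le, hy.2⟩ hxy (hdf x hx)
    rw [slope_def_field] at h1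
    have h2 := hf'pos x hx
    have hyx : 0 < y - x := sub_pos.2 hxy
    have h3 := (le_div_iff₀ hyx).mp h1
    nlinarith
  -- main argument
  intro t₁ ht₁
  by_contra hcon
  push_neg at hcon
  have ht₁T : t₁ ∈ Set.Ico 0 T := ⟨ht₁.1.le, ht₁.2⟩
  have hrcont : ContinuousOn r (Set.Icc 0 t₁) := fun s hs =>
    ((hr s ⟨hs.1, lt_of_le_of_lt hs.2 ht₁.2⟩).continuousWithinAt).mono (fun u hu => hu.1)
  have hrbcont : ContinuousOn rb (Set.Icc 0 t₁) := fun s hs =>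
    ((hrb s ⟨hs.1, lt_of_le_of_lt hs.2 ht₁.2⟩).continuousWithinAt).mono (fun u hu => hu.1)
  set S : Set ℝ := Set.Icc 0 t₁ ∩ (fun s => rb s - r s) ⁻¹' Set.Iic 0 with hS
  have hScl : IsClosed S :=
    (hrbcont.sub hrcont).preimage_isClosed_of_isClosed isClosed_Icc isClosed_Iic
  have hSne : S.Nonempty := ⟨t₁, ⟨ht₁.1.le, le_refl _⟩, by simpa using hcon⟩
  have hSbdd : BddBelow S := ⟨0, fun s hs => hs.1.1⟩
  set t₀ := sInf S with ht₀def
  have ht₀S : t₀ ∈ S := hScl.csInf_mem hSne hSbdd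
  have hrbr : rb t₀ ≤ r t₀ := by simpa [sub_nonpos] using ht₀S.2
  have ht₀pos : 0 < t₀ := by
    rcases lt_or_eq_of_le ht₀S.1.1 with h | h
    · exact h
    · exfalso
      rw [← h] at hrbr
      rw [hr0, hrb0] at hrbr
      linarith
  have ht₀Ico : t₀ ∈ Set.Ico 0 T := ⟨ht₀S.1.1, lt_of_le_of_lt ht₀S.1.2 ht₁.2⟩
  have hlt : ∀ s, 0 ≤ s → s < t₀ → r s < rb s := by
    intro s h0 hst
    by_contra h
    push_neg at h
    have hsS : s ∈ S := ⟨⟨h0, le_trans hst.le ht₀S.1.2⟩, by simpa [sub_nonpos] using h⟩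
    exact absurd hsS (notMem_of_lt_csInf hst hSbdd)
  have hsubIcc : Set.Icc 0 t₀ ⊆ Set.Ico 0 T :=
    fun s hs => ⟨hs.1, lt_of_le_of_lt hs.2 ht₀Ico.2⟩
  -- U strictly increasing
  have hUcont : ContinuousOn (fun s => f (r s) * Real.sin (θ s)) (Set.Icc 0 t₀) :=
    fun s hs => ((hD s (hsubIcc hs)).2.continuousWithinAt).mono hsubIcc
  have hUbcont : ContinuousOn (fun s => f (rb s) * Real.sin (θb s)) (Set.Icc 0 t₀) :=
    fun s hs => ((hDb s (hsubIcc hs)).2.continuousWithinAt).mono hsubIcc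
  have hUsm : StrictMonoOn (fun s => f (r s) * Real.sin (θ s)) (Set.Icc 0 t₀) := by
    refine strictMonoOn_of_hasDerivWithinAt_pos (convex_Icc 0 t₀) hUcont
      (f' := fun x => f' (r x)) ?_ ?_
    · simp only [interior_Icc]
      intro x hx
      exact ((hD x (hsubIcc (Set.Ioo_subset_Icc_self hx))).2).mono
        (fun u hu => hsubIcc (Set.Ioo_subset_Icc_self hu))
    · simp only [interior_Icc]
      intro x hx
      exact hf'pos _ (hrange_r x (hsubIcc (Set.Ioo_subset_Icc_self hx)))
  have hU0 : f (r 0) * Real.sin (θ 0) = 0 := by simp [hθ0]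
  have hUpos : 0 < f (r t₀) * Real.sin (θ t₀) := by
    have h := hUsm ⟨le_refl 0, ht₀pos.le⟩ ⟨ht₀pos.le, le_refl t₀⟩ ht₀pos
    simpa [hθ0] using h
  -- Ub - U monotone
  have hWmono : MonotoneOn (fun s => f (rb s) * Real.sin (θb s) - f (r s) * Real.sin (θ s))
      (Set.Icc 0 t₀) := by
    refine monotoneOn_of_hasDerivWithinAt_nonneg (convex_Icc 0 t₀) (hUbcont.sub hUcont)
      (f' := fun x => f' (rb x) - f' (r x)) ?_ ?_
    · simp only [interior_Icc]
      intro x hx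
      exact (((hDb x (hsubIcc (Set.Ioo_subset_Icc_self hx))).2).sub
        ((hD x (hsubIcc (Set.Ioo_subset_Icc_self hx))).2)).mono
        (fun u hu => hsubIcc (Set.Ioo_subset_Icc_self hu))
    · simp only [interior_Icc]
      intro x hx
      have hx' := hsubIcc (Set.Ioo_subset_Icc_self hx)
      have hrlt := hlt x hx.1.le hx.2
      exact sub_nonneg.2 (hf'mono _ _ (hrange_r x hx') (hrange_rb x hx') hrlt.le)
  have hW : f (r t₀) * Real.sin (θ t₀) ≤ f (rb t₀) * Real.sin (θb t₀) := by
    have h := hWmono ⟨le_refl 0, ht₀pos.le⟩ ⟨ht₀pos.le, le_refl t₀⟩ ht₀pos.le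
    simp only [hθ0, hθb0, Real.sin_zero, mul_zero, sub_zero, sub_self] at h
    linarith
  -- Pythagoras
  have hpyr := Real.sin_sq_add_cos_sq (θ t₀)
  have hpyrb := Real.sin_sq_add_cos_sq (θb t₀)
  have hA : (f (r t₀)) ^ 2 = (f (r t₀) * Real.sin (θ t₀)) ^ 2 + (f δ) ^ 2 := by
    have h1 := hFc t₀ ht₀Ico
    rw [← h1]
    linear_combination (-(f (r t₀)) ^ 2) * hpyr
  have hB : (f (rb t₀)) ^ 2 = (f (rb t₀) * Real.sin (θb t₀)) ^ 2 + (f δb) ^ 2 := by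
    have h1 := hFbc t₀ ht₀Ico
    rw [← h1]
    linear_combination (-(f (rb t₀)) ^ 2) * hpyrb
  have hfδ : 0 < f δ := hpos δ ⟨hδ, hδR⟩
  have hfδδb : f δ < f δb := hfmono δ δb ⟨hδ, hδR⟩ ⟨lt_trans hδ hδδb, hδbR⟩ hδδb
  have hfle : f (rb t₀) ≤ f (r t₀) := by
    rcases lt_or_eq_of_le hrbr with h | h
    · exact (hfmono _ _ (hrange_rb t₀ ht₀Ico) (hrange_r t₀ ht₀Ico) h).le
    · rw [h]
  have hfrpos : 0 < f (r t₀) := hpos _ (hrange_r t₀ ht₀Ico)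
  have hfrbpos : 0 < f (rb t₀) := hpos _ (hrange_rb t₀ ht₀Ico)
  nlinarith [hW, hUpos, hA, hB, hfδ, hfδδb, hfle, hfrpos, hfrbpos]
end
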